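/- Consider three coverage setups using the same locations x_n, powers P_n and SIR targets β_n, with antenna numbers M_n ≥ 2: (i) SU-BF, with Δ_n = M_n and Ψ_n = 1 for all n; (ii) SISO, with Δ'_n = 1 and Ψ'_n = 1 for all n; (iii) full SDMA, with Δ''_n = 1 and Ψ''_n = M_n for all n. Then the coverage probabilities satisfy P_c(Δ, Ψ) ≥ P_c(Δ', Ψ') ≥ P_c(Δ'', Ψ''). -/

import Mathlib

/-!
A `Gamma(k, 1)` variable with integer `k ≥ 1` stochastically dominates an `Exp(1)` one: its
survival function `e^{-x} ∑_{j<k} x^j / j!` is at least `e^{-x}`. Hence the quantile map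
`x ↦ -log (1 - F_k x)` sends `Gamma(k, 1)` to `Exp(1)` and never exceeds `x`. Applying it to the
SU-BF signal fadings, resp. to the full-SDMA interference fadings, yields independent families
with the joint law of SISO that lie below the original signals, resp. interferences. As the SIR is
increasing in the signal and decreasing in the interference, the coverage events are nested.
-/

open MeasureTheory ProbabilityTheory ENNReal

/-- Interference at the typical user from all base stations except `n`, valued in `[0,∞]`. -/
noncomputable def interference {Ω : Type*} (P : ℕ → ℝ) (x : ℕ → EuclideanSpace ℝ (Fin 2))
    (α : ℝ) (g : ℕ → Ω → ℝ) (n : ℕ) (ω : Ω) : ℝ≥0∞ :=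
  ∑' m : ℕ, if m = n then 0 else ENNReal.ofReal (P m * g m ω * ‖x m‖ ^ (-α))

/-- SIR of base station `n` at the typical user, valued in `[0,∞]`
(it equals `0` when the interference is infinite). -/
noncomputable def SIR {Ω : Type*} (P : ℕ → ℝ) (x : ℕ → EuclideanSpace ℝ (Fin 2))
    (α : ℝ) (h g : ℕ → Ω → ℝ) (n : ℕ) (ω : Ω) : ℝ≥0∞ :=
  ENNReal.ofReal (P n * h n ω * ‖x n‖ ^ (-α)) / interference P x α g n ω

open Real Set Filter Topology

section ProbabilityIntegralTransform

variable {μ : Measure ℝ} [IsProbabilityMeasure μ]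

theorem measure_setOf_cdf_le (hF : Continuous (cdf μ)) {u : ℝ} (hu : u < 1) :
    μ {x | cdf μ x ≤ u} = ENNReal.ofReal u := by
  set A := {x | cdf μ x ≤ u}
  rcases A.eq_empty_or_nonempty with hA | hA
  · have hu0 : u ≤ 0 := by
      by_contra! hu0
      obtain ⟨y, hy⟩ := ((tendsto_cdf_atBot μ).eventually (gt_mem_nhds hu0)).exists
      exact hA.subset (show y ∈ A from hy.le)
    rw [hA, measure_empty, ENNReal.ofReal_of_nonpos hu0]
  have hbdd : BddAbove A := by
    obtain ⟨b, hb⟩ := ((tendsto_cdf_atTop μ).eventually (lt_mem_nhds hu)).exists_forall_of_atTop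
    exact ⟨b, fun y hy => not_lt.1 fun hby => (hb y hby.le).not_ge hy⟩
  have hsA : sSup A ∈ A := (isClosed_le hF continuous_const).csSup_mem hA hbdd
  have hA_eq : A = Iic (sSup A) :=
    Subset.antisymm (fun y hy => le_csSup hbdd hy) fun y hy => (monotone_cdf μ hy).trans hsA
  have hF_eq : cdf μ (sSup A) = u := by
    refine le_antisymm hsA (not_lt.1 fun hlt => ?_)
    have hev : ∀ᶠ y in 𝓝[>] sSup A, cdf μ y < u :=
      nhdsWithin_le_nhds (hF.continuousAt.eventually_lt continuousAt_const hlt)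
    obtain ⟨y, hyA, hy⟩ := (hev.and self_mem_nhdsWithin).exists
    exact (le_csSup hbdd (show y ∈ A from hyA.le)).not_gt hy
  rw [hA_eq, ← ofReal_cdf, hF_eq]

theorem map_neg_log_one_sub_cdf_eq_expMeasure (hF : Continuous (cdf μ)) (hF1 : ∀ x, cdf μ x < 1) :
    μ.map (fun x => -Real.log (1 - cdf μ x)) = expMeasure 1 := by
  have hmeas : Measurable (fun x => -Real.log (1 - cdf μ x)) := by fun_prop
  have : IsProbabilityMeasure (expMeasure 1) := isProbabilityMeasure_expMeasure one_pos
  refine Measure.ext_of_Iic _ _ fun t => ?_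
  have hpre : (fun x => -Real.log (1 - cdf μ x)) ⁻¹' Iic t = {x | cdf μ x ≤ 1 - exp (-t)} := by
    ext x
    simp only [mem_preimage, mem_Iic, mem_ofPred_eq, neg_le,
      Real.le_log_iff_exp_le (sub_pos.2 (hF1 x))]
    constructor <;> intro <;> linarith
  rw [Measure.map_apply hmeas measurableSet_Iic, hpre,
    measure_setOf_cdf_le hF (by linarith [exp_pos (-t)]), ← ofReal_cdf, cdf_expMeasure_eq one_pos,
    one_mul]
  split_ifs with ht
  · rfl
  · rw [ENNReal.ofReal_zero, ENNReal.ofReal_eq_zero, sub_nonpos, one_le_exp_iff]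
    linarith

theorem exists_measurable_le_map_eq_expMeasure (hF : Continuous (cdf μ))
    (hF1 : ∀ x, cdf μ x < 1) (hle : ∀ x, cdf μ x ≤ cdf (expMeasure 1) x) :
    ∃ φ : ℝ → ℝ, Measurable φ ∧ (∀ x, φ x ≤ x) ∧ μ.map φ = expMeasure 1 := by
  -- off the `μ`-null set `x ≤ 0` the quantile map already lies below the identity
  refine ⟨fun x => min x (-Real.log (1 - cdf μ x)), by fun_prop, fun x => min_le_left _ _, ?_⟩
  rw [← map_neg_log_one_sub_cdf_eq_expMeasure hF hF1]
  refine Measure.map_congr ?_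
  have hpos : ∀ᵐ x ∂μ, 0 < x := by
    refine measure_mono_null (fun x (hx : ¬ 0 < x) => show x ∈ Iic 0 from not_lt.1 hx) ?_
    rw [← ofReal_cdf, ENNReal.ofReal_eq_zero]
    simpa [cdf_expMeasure_eq one_pos] using hle 0
  filter_upwards [hpos] with x hx
  refine min_eq_right ?_
  have := hle x
  rw [cdf_expMeasure_eq one_pos, if_pos hx.le, one_mul] at this
  rw [neg_le, Real.le_log_iff_exp_le (sub_pos.2 (hF1 x))]
  linarith

end ProbabilityIntegralTransform

/-- For `x ≥ 0` this is `P(Poisson(x) ≤ k)`, the survival function of `Gamma(k + 1, 1)`. -/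
noncomputable def gammaSurvival (k : ℕ) (x : ℝ) : ℝ :=
  exp (-x) * ∑ j ∈ Finset.range (k + 1), x ^ j / j.factorial

@[simp]
theorem gammaSurvival_zero_left (x : ℝ) : gammaSurvival 0 x = exp (-x) := by
  simp [gammaSurvival]

@[simp]
theorem gammaSurvival_zero_right (k : ℕ) : gammaSurvival k 0 = 1 := by
  simp [gammaSurvival, Finset.sum_range_succ']

theorem hasDerivAt_gammaSurvival (k : ℕ) (x : ℝ) :
    HasDerivAt (gammaSurvival k) (-(x ^ k * exp (-x) / k.factorial)) x := by
  have hexp : HasDerivAt (fun y => exp (-y)) (-exp (-x)) x := by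
    simpa using (hasDerivAt_neg x).exp
  induction k with
  | zero => simpa [funext gammaSurvival_zero_left] using hexp
  | succ k ih =>
    have hterm := hexp.mul ((hasDerivAt_pow (k + 1) x).div_const ((k + 1).factorial : ℝ))
    have hsplit : gammaSurvival (k + 1) =
        fun y => gammaSurvival k y + exp (-y) * (y ^ (k + 1) / (k + 1).factorial) := by
      funext y
      simp only [gammaSurvival, Finset.sum_range_succ _ (k + 1), mul_add]
    rw [hsplit]
    refine (ih.add hterm).congr_deriv ?_
    rw [Nat.add_sub_cancel, Nat.factorial_succ]
    push_cast
    field_simp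
    ring

theorem continuous_gammaSurvival (k : ℕ) : Continuous (gammaSurvival k) := by
  unfold gammaSurvival
  fun_prop

theorem exp_neg_le_gammaSurvival (k : ℕ) {x : ℝ} (hx : 0 ≤ x) :
    exp (-x) ≤ gammaSurvival k x := by
  unfold gammaSurvival
  refine le_mul_of_one_le_right (exp_pos _).le ?_
  calc (1 : ℝ) = x ^ 0 / Nat.factorial 0 := by simp
    _ ≤ ∑ j ∈ Finset.range (k + 1), x ^ j / j.factorial :=
      Finset.single_le_sum (f := fun j => x ^ j / (j.factorial : ℝ)) (fun j _ => by positivity)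
        (Finset.mem_range.2 k.succ_pos)

theorem gammaPDFReal_natCast_add_one (k : ℕ) {x : ℝ} (hx : 0 ≤ x) :
    gammaPDFReal (k + 1) 1 x = x ^ k * exp (-x) / k.factorial := by
  rw [gammaPDFReal, if_pos hx, Real.Gamma_nat_eq_factorial, add_sub_cancel_right,
    Real.rpow_natCast]
  simp only [Real.one_rpow, one_mul]
  ring

theorem cdf_gammaMeasure_natCast_add_one_of_nonneg (k : ℕ) {x : ℝ} (hx : 0 ≤ x) :
    cdf (gammaMeasure (k + 1) 1) x = 1 - gammaSurvival k x := by
  have hvanish : ∀ y ∈ Iic x \ Icc 0 x, gammaPDFReal (k + 1) 1 y = 0 := fun y hy =>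
    by simp [gammaPDFReal, lt_of_not_ge (fun h => hy.2 ⟨h, hy.1⟩)]
  have hpdf :
      EqOn (gammaPDFReal (k + 1) 1) (fun y => y ^ k * exp (-y) / k.factorial) (uIcc 0 x) :=
    fun y hy => gammaPDFReal_natCast_add_one k (by rw [uIcc_of_le hx] at hy; exact hy.1)
  have hcont : Continuous fun y : ℝ => y ^ k * exp (-y) / k.factorial := by fun_prop
  rw [cdf_gammaMeasure_eq_integral (by positivity) one_pos,
    setIntegral_eq_of_subset_of_forall_sdiff_eq_zero measurableSet_Iic Icc_subset_Iic_self
      hvanish,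
    integral_Icc_eq_integral_Ioc, ← intervalIntegral.integral_of_le hx,
    intervalIntegral.integral_congr hpdf,
    intervalIntegral.integral_eq_sub_of_hasDerivAt
      (fun y _ => (hasDerivAt_gammaSurvival k y).neg.congr_deriv (neg_neg _))
      (hcont.intervalIntegrable _ _)]
  rw [Pi.neg_apply, Pi.neg_apply, gammaSurvival_zero_right]
  ring

theorem cdf_gammaMeasure_natCast_add_one (k : ℕ) (x : ℝ) :
    cdf (gammaMeasure (k + 1) 1) x = 1 - gammaSurvival k (max x 0) := by
  rcases le_total 0 x with hx | hx
  · rw [max_eq_left hx, cdf_gammaMeasure_natCast_add_one_of_nonneg k hx]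
  have h0 := cdf_gammaMeasure_natCast_add_one_of_nonneg k le_rfl
  rw [gammaSurvival_zero_right, sub_self] at h0
  rw [max_eq_right hx, gammaSurvival_zero_right, sub_self]
  exact le_antisymm (h0 ▸ monotone_cdf _ hx) (cdf_nonneg _ _)

theorem exists_measurable_le_map_gammaMeasure_eq {k : ℕ} (hk : 1 ≤ k) :
    ∃ φ : ℝ → ℝ, Measurable φ ∧ (∀ x, φ x ≤ x) ∧ (gammaMeasure k 1).map φ = gammaMeasure 1 1 := by
  obtain ⟨k, rfl⟩ : ∃ j, k = j + 1 := ⟨k - 1, by omega⟩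
  have : IsProbabilityMeasure (gammaMeasure (k + 1) 1) :=
    isProbabilityMeasure_gammaMeasure (by positivity) one_pos
  have hcdf := cdf_gammaMeasure_natCast_add_one k
  have hcdf_exp (x : ℝ) : cdf (expMeasure 1) x = 1 - exp (-max x 0) := by
    simpa [expMeasure] using cdf_gammaMeasure_natCast_add_one 0 x
  push_cast
  refine exists_measurable_le_map_eq_expMeasure ?_ (fun x => ?_) (fun x => ?_)
  · rw [funext hcdf]
    exact continuous_const.sub
      ((continuous_gammaSurvival k).comp (continuous_id.max continuous_const))
  · rw [hcdf, sub_lt_self_iff]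
    exact (exp_pos _).trans_le (exp_neg_le_gammaSurvival k (le_max_right x 0))
  · rw [hcdf, hcdf_exp, _root_.sub_le_sub_iff_left]
    exact exp_neg_le_gammaSurvival k (le_max_right x 0)

theorem ProbabilityTheory.iIndepFun.sumElim_comp {Ω ι κ β γ : Type*} [MeasurableSpace Ω]
    {μ : Measure Ω} [MeasurableSpace β] [MeasurableSpace γ] {f : ι → Ω → β} {g : κ → Ω → β}
    (hind : iIndepFun (Sum.elim f g) μ) {φ : ι → β → γ} {ψ : κ → β → γ} (hφ : ∀ i, Measurable (φ i))
    (hψ : ∀ j, Measurable (ψ j)) :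
    iIndepFun (Sum.elim (fun i => φ i ∘ f i) (fun j => ψ j ∘ g j)) μ := by
  convert hind.comp (Sum.elim φ ψ) (Sum.forall.2 ⟨hφ, hψ⟩) using 1
  ext (i | j) <;> rfl

section Coverage

variable {Ω : Type*} (P : ℕ → ℝ) (x : ℕ → EuclideanSpace ℝ (Fin 2)) (α : ℝ) (β : ℕ → ℝ)

theorem SIR_mono {h₁ h₂ g₁ g₂ : ℕ → Ω → ℝ} (hP : ∀ n, 0 ≤ P n) {ω : Ω}
    (hh : ∀ n, h₁ n ω ≤ h₂ n ω) (hg : ∀ n, g₂ n ω ≤ g₁ n ω) (n : ℕ) :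
    SIR P x α h₁ g₁ n ω ≤ SIR P x α h₂ g₂ n ω := by
  have hterm {f₁ f₂ : ℕ → Ω → ℝ} (hf : ∀ m, f₁ m ω ≤ f₂ m ω) (m : ℕ) :
      ENNReal.ofReal (P m * f₁ m ω * ‖x m‖ ^ (-α)) ≤
        ENNReal.ofReal (P m * f₂ m ω * ‖x m‖ ^ (-α)) := by
    gcongr
    exacts [hP m, hf m]
  refine ENNReal.div_le_div (hterm hh n) (ENNReal.tsum_le_tsum fun m => ?_)
  split_ifs
  exacts [le_rfl, hterm hg m]

def coverageEvent (h g : ℕ → Ω → ℝ) : Set Ω :=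
  {ω | ∃ n, ENNReal.ofReal (β n) < SIR P x α h g n ω}

theorem coverageEvent_mono {h₁ h₂ g₁ g₂ : ℕ → Ω → ℝ} (hP : ∀ n, 0 ≤ P n)
    (hh : ∀ n ω, h₁ n ω ≤ h₂ n ω) (hg : ∀ n ω, g₂ n ω ≤ g₁ n ω) :
    coverageEvent P x α β h₁ g₁ ⊆ coverageEvent P x α β h₂ g₂ := fun ω ⟨n, hn⟩ =>
  ⟨n, hn.trans_le (SIR_mono P x α hP (hh · ω) (hg · ω) n)⟩

variable [MeasurableSpace Ω]

theorem measurable_SIR {h g : ℕ → Ω → ℝ} (hh : ∀ n, Measurable (h n))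
    (hg : ∀ n, Measurable (g n)) (n : ℕ) : Measurable (SIR P x α h g n) := by
  refine Measurable.div (by fun_prop) (Measurable.tsum fun m => ?_)
  split_ifs
  · exact measurable_const
  · fun_prop

theorem measurableSet_coverageEvent {h g : ℕ → Ω → ℝ} (hh : ∀ n, Measurable (h n))
    (hg : ∀ n, Measurable (g n)) : MeasurableSet (coverageEvent P x α β h g) := by
  rw [coverageEvent, ofPred_exists]
  exact MeasurableSet.iUnion fun n =>
    measurableSet_lt measurable_const (measurable_SIR P x α hh hg n)

theorem measure_coverageEvent_eq_infinitePi (μ : Measure Ω) [IsProbabilityMeasure μ]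
    {h g : ℕ → Ω → ℝ} (hh : ∀ n, Measurable (h n)) (hg : ∀ n, Measurable (g n))
    (hind : iIndepFun (Sum.elim h g) μ) :
    μ (coverageEvent P x α β h g) = Measure.infinitePi (fun i => μ.map (Sum.elim h g i))
      (coverageEvent P x α β (fun n c => c (.inl n)) (fun n c => c (.inr n))) := by
  have hm : ∀ i, Measurable (Sum.elim h g i) := Sum.forall.2 ⟨hh, hg⟩
  rw [← hind.map_fun_eq_infinitePi_map hm, Measure.map_apply (measurable_pi_lambda _ hm)
    (measurableSet_coverageEvent P x α β (fun n => measurable_pi_apply _) fun n =>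
      measurable_pi_apply _)]
  rfl

theorem measure_coverageEvent_congr {Ω' : Type*} [MeasurableSpace Ω'] (μ : Measure Ω)
    [IsProbabilityMeasure μ] (μ' : Measure Ω') [IsProbabilityMeasure μ']
    {h g : ℕ → Ω → ℝ} {h' g' : ℕ → Ω' → ℝ}
    (hh : ∀ n, Measurable (h n)) (hg : ∀ n, Measurable (g n))
    (hh' : ∀ n, Measurable (h' n)) (hg' : ∀ n, Measurable (g' n))
    (hind : iIndepFun (Sum.elim h g) μ) (hind' : iIndepFun (Sum.elim h' g') μ')
    (hlaw : ∀ i, μ.map (Sum.elim h g i) = μ'.map (Sum.elim h' g' i)) :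
    μ (coverageEvent P x α β h g) = μ' (coverageEvent P x α β h' g') := by
  rw [measure_coverageEvent_eq_infinitePi P x α β μ hh hg hind,
    measure_coverageEvent_eq_infinitePi P x α β μ' hh' hg' hind', funext hlaw]

end Coverage

theorem coverage_SUBF_ge_SISO_ge_fullSDMA_general
    (α : ℝ)
    (x : ℕ → EuclideanSpace ℝ (Fin 2))
    (P : ℕ → ℝ) (hP : ∀ n, 0 < P n)
    (β : ℕ → ℝ)
    (M : ℕ → ℕ) (hM : ∀ n, 2 ≤ M n)
    {Ω : Type*} [MeasurableSpace Ω] (μ : Measure Ω) [IsProbabilityMeasure μ]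
    {Ω' : Type*} [MeasurableSpace Ω'] (μ' : Measure Ω') [IsProbabilityMeasure μ']
    {Ω'' : Type*} [MeasurableSpace Ω''] (μ'' : Measure Ω'') [IsProbabilityMeasure μ'']
    (h g : ℕ → Ω → ℝ) (h' g' : ℕ → Ω' → ℝ) (h'' g'' : ℕ → Ω'' → ℝ)
    (hhm : ∀ n, Measurable (h n)) (hgm : ∀ n, Measurable (g n))
    (hh'm : ∀ n, Measurable (h' n)) (hg'm : ∀ n, Measurable (g' n))
    (hh''m : ∀ n, Measurable (h'' n)) (hg''m : ∀ n, Measurable (g'' n))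
    (hindep : iIndepFun
      (Sum.elim h g) μ)
    (hindep' : iIndepFun
      (Sum.elim h' g') μ')
    (hindep'' : iIndepFun
      (Sum.elim h'' g'') μ'')
    (hhd : ∀ n, Measure.map (h n) μ = gammaMeasure (M n) 1)
    (hgd : ∀ n, Measure.map (g n) μ = gammaMeasure 1 1)
    (hh'd : ∀ n, Measure.map (h' n) μ' = gammaMeasure 1 1)
    (hg'd : ∀ n, Measure.map (g' n) μ' = gammaMeasure 1 1)
    (hh''d : ∀ n, Measure.map (h'' n) μ'' = gammaMeasure 1 1)
    (hg''d : ∀ n, Measure.map (g'' n) μ'' = gammaMeasure (M n) 1) :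
    μ'' {ω | ∃ n : ℕ, ENNReal.ofReal (β n) < SIR P x α h'' g'' n ω} ≤
      μ' {ω | ∃ n : ℕ, ENNReal.ofReal (β n) < SIR P x α h' g' n ω} ∧
    μ' {ω | ∃ n : ℕ, ENNReal.ofReal (β n) < SIR P x α h' g' n ω} ≤
      μ {ω | ∃ n : ℕ, ENNReal.ofReal (β n) < SIR P x α h g n ω} := by
  have hP0 n : 0 ≤ P n := (hP n).le
  choose φ hφm hφle hφlaw using fun n =>
    exists_measurable_le_map_gammaMeasure_eq (one_le_two.trans (hM n))
  constructor
  · calc μ'' (coverageEvent P x α β h'' g'')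
        ≤ μ'' (coverageEvent P x α β h'' fun n => φ n ∘ g'' n) :=
          measure_mono (coverageEvent_mono P x α β hP0 (fun _ _ => le_rfl) fun n _ => hφle n _)
      _ = μ' (coverageEvent P x α β h' g') :=
          measure_coverageEvent_congr P x α β μ'' μ' hh''m (fun n => (hφm n).comp (hg''m n))
            hh'm hg'm (hindep''.sumElim_comp (fun _ => measurable_id) hφm) hindep'
            (Sum.forall.2 ⟨fun n => (hh''d n).trans (hh'd n).symm,
              fun n => by
                rw [Sum.elim_inr, Sum.elim_inr, ← Measure.map_map (hφm n) (hg''m n), hg''d n,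
                  hφlaw n, hg'd n]⟩)
  · calc μ' (coverageEvent P x α β h' g')
        = μ (coverageEvent P x α β (fun n => φ n ∘ h n) g) :=
          measure_coverageEvent_congr P x α β μ' μ hh'm hg'm (fun n => (hφm n).comp (hhm n))
            hgm hindep' (hindep.sumElim_comp hφm fun _ => measurable_id)
            (Sum.forall.2 ⟨fun n => by
                rw [Sum.elim_inl, Sum.elim_inl, ← Measure.map_map (hφm n) (hhm n), hhd n,
                  hφlaw n, hh'd n],
              fun n => (hg'd n).trans (hgd n).symm⟩)
      _ ≤ μ (coverageEvent P x α β h g) :=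
          measure_mono (coverageEvent_mono P x α β hP0 (fun n _ => hφle n _) fun _ _ => le_rfl)

/-- The coverage probability of SU-BF (`Δ n = M n`, `Ψ n = 1`) is at least that of SISO
(`Δ' n = 1`, `Ψ' n = 1`), which is in turn at least that of full SDMA
(`Δ'' n = 1`, `Ψ'' n = M n`). -/
theorem coverage_SUBF_ge_SISO_ge_fullSDMA
    (α : ℝ) (hα : 2 < α)
    (x : ℕ → EuclideanSpace ℝ (Fin 2)) (hx : ∀ n, x n ≠ 0)
    (P : ℕ → ℝ) (hP : ∀ n, 0 < P n)
    (β : ℕ → ℝ) (hβ : ∀ n, 0 < β n)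
    (M : ℕ → ℕ) (hM : ∀ n, 2 ≤ M n)
    {Ω : Type*} [MeasurableSpace Ω] (μ : Measure Ω) [IsProbabilityMeasure μ]
    {Ω' : Type*} [MeasurableSpace Ω'] (μ' : Measure Ω') [IsProbabilityMeasure μ']
    {Ω'' : Type*} [MeasurableSpace Ω''] (μ'' : Measure Ω'') [IsProbabilityMeasure μ'']
    (h g : ℕ → Ω → ℝ) (h' g' : ℕ → Ω' → ℝ) (h'' g'' : ℕ → Ω'' → ℝ)
    (hhm : ∀ n, Measurable (h n)) (hgm : ∀ n, Measurable (g n))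
    (hh'm : ∀ n, Measurable (h' n)) (hg'm : ∀ n, Measurable (g' n))
    (hh''m : ∀ n, Measurable (h'' n)) (hg''m : ∀ n, Measurable (g'' n))
    (hindep : iIndepFun
      (Sum.elim h g) μ)
    (hindep' : iIndepFun
      (Sum.elim h' g') μ')
    (hindep'' : iIndepFun
      (Sum.elim h'' g'') μ'')
    (hhd : ∀ n, Measure.map (h n) μ = gammaMeasure (M n) 1)
    (hgd : ∀ n, Measure.map (g n) μ = gammaMeasure 1 1)
    (hh'd : ∀ n, Measure.map (h' n) μ' = gammaMeasure 1 1)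
    (hg'd : ∀ n, Measure.map (g' n) μ' = gammaMeasure 1 1)
    (hh''d : ∀ n, Measure.map (h'' n) μ'' = gammaMeasure 1 1)
    (hg''d : ∀ n, Measure.map (g'' n) μ'' = gammaMeasure (M n) 1) :
    μ'' {ω | ∃ n : ℕ, ENNReal.ofReal (β n) < SIR P x α h'' g'' n ω} ≤
      μ' {ω | ∃ n : ℕ, ENNReal.ofReal (β n) < SIR P x α h' g' n ω} ∧
    μ' {ω | ∃ n : ℕ, ENNReal.ofReal (β n) < SIR P x α h' g' n ω} ≤
      μ {ω | ∃ n : ℕ, ENNReal.ofReal (β n) < SIR P x α h g n ω} :=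
  coverage_SUBF_ge_SISO_ge_fullSDMA_general α x P hP β M hM μ μ' μ'' h g h' g' h'' g'' hhm hgm hh'm
    hg'm hh''m hg''m hindep hindep' hindep'' hhd hgd hh'd hg'd hh''d hg''d
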